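/- Let φ : B → A be an L-homomorphism between L-structures, n ∈ ℕ, and for i = 1, 2, 3 let F_i^B (resp. F_i^A) be maps from n-tuples of reflexive admissible binary relations on B (resp. A) to reflexive admissible binary relations on B (resp. A), satisfying the homomorphism property: φ(F_i^B(R̄)) ⊆ F_i^A(φ(R̄)) for every n-tuple R̄ of reflexive admissible relations on B, where φ(R̄) denotes the tuple (φ(R_1), …, φ(R_n)). Then for every such tuple R̄, φ(K(F_1^B(R̄), F_2^B(R̄); F_3^B(R̄))) ⊆ K(F_1^A(φ(R̄)), F_2^A(φ(R̄)); F_3^A(φ(R̄))). -/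
import Mathlib


open FirstOrder FirstOrder.Language

/-- A binary relation is admissible if it is preserved by all function symbols. -/
def Admissible (L : FirstOrder.Language) {A : Type*} [L.Structure A]
    (R : A → A → Prop) : Prop :=
  ∀ ⦃n : ℕ⦄ (f : L.Functions n) (a b : Fin n → A),
    (∀ i, R (a i) (b i)) → R (Structure.funMap f a) (Structure.funMap f b)

/-- `cl L P` is the smallest reflexive admissible relation containing `P`. -/
def cl (L : FirstOrder.Language) {A : Type*} [L.Structure A]
    (P : A → A → Prop) : A → A → Prop :=
  fun a b => ∀ R : A → A → Prop, Reflexive R → Admissible L R →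
    (∀ x y, P x y → R x y) → R a b

/-- For a homomorphism `φ : B → A`, `rmap L φ R` is the reflexive admissible
relation on `A` generated by the image of `R` under `φ`. -/
def rmap (L : FirstOrder.Language) {A B : Type*} [L.Structure A] [L.Structure B]
    (φ : B →[L] A) (R : B → B → Prop) : A → A → Prop :=
  cl L (fun x y => ∃ u v, R u v ∧ φ u = x ∧ φ v = y)

/-- `t` is a Mal'cev term modulo `F` and `G` on `A`. -/
def MalcevModulo (L : FirstOrder.Language) {A : Type*} [L.Structure A]
    (F G : (A → A → Prop) → (A → A → Prop)) (t : L.Term (Fin 3)) : Prop :=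
  ∀ R : A → A → Prop, Reflexive R → Admissible L R → ∀ a b, R a b →
    F R a (t.realize ![a, b, b]) ∧ G R (t.realize ![a, a, b]) b

/-- The operator `K(R, S; U; T)`. -/
def K4 (L : FirstOrder.Language) {A : Type*} [L.Structure A]
    (R S U T : A → A → Prop) : A → A → Prop :=
  fun z w => ∃ (h k : ℕ) (t : L.Term (Fin h ⊕ Fin k))
    (a a' : Fin h → A) (b b' : Fin k → A),
    (∀ i, R (a i) (a' i)) ∧ (∀ j, S (b j) (b' j)) ∧
    z = t.realize (Sum.elim a' b) ∧ w = t.realize (Sum.elim a' b') ∧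
    U (t.realize (Sum.elim a b)) (t.realize (Sum.elim a' b)) ∧
    T (t.realize (Sum.elim a b)) (t.realize (Sum.elim a b'))

/-- The operator `K(R, S; T)`. -/
def K3 (L : FirstOrder.Language) {A : Type*} [L.Structure A]
    (R S T : A → A → Prop) : A → A → Prop :=
  fun z w => ∃ (h k : ℕ) (t : L.Term (Fin h ⊕ Fin k))
    (a a' : Fin h → A) (b b' : Fin k → A),
    (∀ i, R (a i) (a' i)) ∧ (∀ j, S (b j) (b' j)) ∧
    z = t.realize (Sum.elim a' b) ∧ w = t.realize (Sum.elim a' b') ∧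
    T (t.realize (Sum.elim a b)) (t.realize (Sum.elim a b'))

lemma K3_refl {L : FirstOrder.Language} {A : Type*} [L.Structure A]
    {R S T : A → A → Prop} (hS : Reflexive S) (hT : Reflexive T) :
    Reflexive (K3 L R S T) := by
  intro x
  exact ⟨0, 1, Term.var (Sum.inr 0), Fin.elim0, Fin.elim0, fun _ => x, fun _ => x,
    fun i => i.elim0, fun _ => hS x, rfl, rfl, hT x⟩

lemma big_realize {L : FirstOrder.Language} {A : Type*} [L.Structure A] {m : ℕ}
    {h k : Fin m → ℕ}
    (t : ∀ i, L.Term (Fin (h i) ⊕ Fin (k i)))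
    (a : ∀ i, Fin (h i) → A) (b : ∀ i, Fin (k i) → A) (f : L.Functions m) :
    (Term.func f (fun i => (t i).relabel
        (Sum.map (fun j => (Fintype.equivFin (Σ i : Fin m, Fin (h i))) ⟨i, j⟩)
                 (fun j => (Fintype.equivFin (Σ i : Fin m, Fin (k i))) ⟨i, j⟩)))).realize
      (Sum.elim
        (fun x => a ((Fintype.equivFin (Σ i : Fin m, Fin (h i))).symm x).1
                    ((Fintype.equivFin (Σ i : Fin m, Fin (h i))).symm x).2)
        (fun x => b ((Fintype.equivFin (Σ i : Fin m, Fin (k i))).symm x).1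
                    ((Fintype.equivFin (Σ i : Fin m, Fin (k i))).symm x).2))
    = Structure.funMap f (fun i => (t i).realize (Sum.elim (a i) (b i))) := by
  simp only [Term.realize, Term.realize_relabel]
  congr 1
  funext i
  congr 1
  funext x
  cases x with
  | inl j =>
    simp only [Function.comp_apply, Sum.map_inl, Sum.elim_inl]
    exact congrArg (fun s : (Σ i : Fin m, Fin (h i)) => a s.1 s.2)
      (Equiv.symm_apply_apply _ _)
  | inr j =>
    simp only [Function.comp_apply, Sum.map_inr, Sum.elim_inr]
    exact congrArg (fun s : (Σ i : Fin m, Fin (k i)) => b s.1 s.2)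
      (Equiv.symm_apply_apply _ _)

lemma K3_adm {L : FirstOrder.Language} {A : Type*} [L.Structure A]
    {R S T : A → A → Prop} (hT : Admissible L T) :
    Admissible L (K3 L R S T) := by
  intro m f z w hzw
  choose h k t a a' b b' hR hS hz hw hT' using hzw
  refine ⟨Fintype.card (Σ i : Fin m, Fin (h i)), Fintype.card (Σ i : Fin m, Fin (k i)),
    Term.func f (fun i => (t i).relabel
        (Sum.map (fun j => (Fintype.equivFin (Σ i : Fin m, Fin (h i))) ⟨i, j⟩)
                 (fun j => (Fintype.equivFin (Σ i : Fin m, Fin (k i))) ⟨i, j⟩))),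
    fun x => a ((Fintype.equivFin (Σ i : Fin m, Fin (h i))).symm x).1
               ((Fintype.equivFin (Σ i : Fin m, Fin (h i))).symm x).2,
    fun x => a' ((Fintype.equivFin (Σ i : Fin m, Fin (h i))).symm x).1
                ((Fintype.equivFin (Σ i : Fin m, Fin (h i))).symm x).2,
    fun x => b ((Fintype.equivFin (Σ i : Fin m, Fin (k i))).symm x).1
               ((Fintype.equivFin (Σ i : Fin m, Fin (k i))).symm x).2,
    fun x => b' ((Fintype.equivFin (Σ i : Fin m, Fin (k i))).symm x).1
                ((Fintype.equivFin (Σ i : Fin m, Fin (k i))).symm x).2,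
    fun x => hR _ _, fun x => hS _ _, ?_, ?_, ?_⟩
  · rw [big_realize]
    exact congrArg _ (funext fun i => hz i)
  · rw [big_realize]
    exact congrArg _ (funext fun i => hw i)
  · rw [big_realize, big_realize]
    exact hT f _ _ hT'


lemma K3_map {L : FirstOrder.Language} {A B : Type*} [L.Structure A] [L.Structure B]
    (φ : B →[L] A) {R S T : B → B → Prop} {R' S' T' : A → A → Prop}
    (hR : ∀ u v, R u v → R' (φ u) (φ v)) (hS : ∀ u v, S u v → S' (φ u) (φ v))
    (hT : ∀ u v, T u v → T' (φ u) (φ v))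
    {u v : B} (hK : K3 L R S T u v) : K3 L R' S' T' (φ u) (φ v) := by
  obtain ⟨h0, k0, t, a, a', b, b', hr, hs, hz, hw, ht⟩ := hK
  subst hz hw
  refine ⟨h0, k0, t, φ ∘ a, φ ∘ a', φ ∘ b, φ ∘ b',
    fun i => hR _ _ (hr i), fun j => hS _ _ (hs j), ?_, ?_, ?_⟩
  · rw [← Sum.comp_elim, HomClass.realize_term]
  · rw [← Sum.comp_elim, HomClass.realize_term]
  · rw [← Sum.comp_elim, ← Sum.comp_elim, HomClass.realize_term, HomClass.realize_term]
    exact hT _ _ ht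

lemma cl_refl {L : FirstOrder.Language} {A : Type*} [L.Structure A]
    (P : A → A → Prop) : Reflexive (cl L P) :=
  fun a _ hr _ _ => hr a

lemma cl_adm {L : FirstOrder.Language} {A : Type*} [L.Structure A]
    (P : A → A → Prop) : Admissible L (cl L P) :=
  fun _ f a b hab R hr had hp => had f a b fun i => hab i R hr had hp

/-- the homomorphism property passes to `K(F₁, F₂; F₃)`. -/
theorem stmt12 {L : FirstOrder.Language} {A B : Type*} [L.Structure A] [L.Structure B]
    (φ : B →[L] A) (n : ℕ)
    (F1B F2B F3B : (Fin n → (B → B → Prop)) → (B → B → Prop))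
    (F1A F2A F3A : (Fin n → (A → A → Prop)) → (A → A → Prop))
    (hFB1 : ∀ Rs : Fin n → (B → B → Prop),
      (∀ j, Reflexive (Rs j)) → (∀ j, Admissible L (Rs j)) →
      Reflexive (F1B Rs) ∧ Admissible L (F1B Rs))
    (hFB2 : ∀ Rs : Fin n → (B → B → Prop),
      (∀ j, Reflexive (Rs j)) → (∀ j, Admissible L (Rs j)) →
      Reflexive (F2B Rs) ∧ Admissible L (F2B Rs))
    (hFB3 : ∀ Rs : Fin n → (B → B → Prop),
      (∀ j, Reflexive (Rs j)) → (∀ j, Admissible L (Rs j)) →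
      Reflexive (F3B Rs) ∧ Admissible L (F3B Rs))
    (hFA1 : ∀ Ss : Fin n → (A → A → Prop),
      (∀ j, Reflexive (Ss j)) → (∀ j, Admissible L (Ss j)) →
      Reflexive (F1A Ss) ∧ Admissible L (F1A Ss))
    (hFA2 : ∀ Ss : Fin n → (A → A → Prop),
      (∀ j, Reflexive (Ss j)) → (∀ j, Admissible L (Ss j)) →
      Reflexive (F2A Ss) ∧ Admissible L (F2A Ss))
    (hFA3 : ∀ Ss : Fin n → (A → A → Prop),
      (∀ j, Reflexive (Ss j)) → (∀ j, Admissible L (Ss j)) →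
      Reflexive (F3A Ss) ∧ Admissible L (F3A Ss))
    (h1 : ∀ Rs : Fin n → (B → B → Prop),
      (∀ j, Reflexive (Rs j)) → (∀ j, Admissible L (Rs j)) →
      ∀ a b, rmap L φ (F1B Rs) a b → F1A (fun j => rmap L φ (Rs j)) a b)
    (h2 : ∀ Rs : Fin n → (B → B → Prop),
      (∀ j, Reflexive (Rs j)) → (∀ j, Admissible L (Rs j)) →
      ∀ a b, rmap L φ (F2B Rs) a b → F2A (fun j => rmap L φ (Rs j)) a b)
    (h3 : ∀ Rs : Fin n → (B → B → Prop),
      (∀ j, Reflexive (Rs j)) → (∀ j, Admissible L (Rs j)) →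
      ∀ a b, rmap L φ (F3B Rs) a b → F3A (fun j => rmap L φ (Rs j)) a b)
    (Rs : Fin n → (B → B → Prop))
    (hr : ∀ j, Reflexive (Rs j)) (ha : ∀ j, Admissible L (Rs j)) :
    ∀ a b : A, rmap L φ (K3 L (F1B Rs) (F2B Rs) (F3B Rs)) a b →
      K3 L (F1A (fun j => rmap L φ (Rs j))) (F2A (fun j => rmap L φ (Rs j)))
        (F3A (fun j => rmap L φ (Rs j))) a b := by

  intro x y hxy
  have hRs'r : ∀ j, Reflexive (rmap L φ (Rs j)) := fun j => cl_refl _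
  have hRs'a : ∀ j, Admissible L (rmap L φ (Rs j)) := fun j => cl_adm _
  have hrefl2 := (hFA2 _ hRs'r hRs'a).1
  have hrefl3 := (hFA3 _ hRs'r hRs'a).1
  have hadm3 := (hFA3 _ hRs'r hRs'a).2
  refine hxy _ (K3_refl hrefl2 hrefl3) (K3_adm hadm3) ?_
  rintro x y ⟨u, v, huv, rfl, rfl⟩
  exact K3_map φ
    (fun u v h => h1 Rs hr ha _ _ (fun R hre had hp => hp _ _ ⟨u, v, h, rfl, rfl⟩))
    (fun u v h => h2 Rs hr ha _ _ (fun R hre had hp => hp _ _ ⟨u, v, h, rfl, rfl⟩))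
    (fun u v h => h3 Rs hr ha _ _ (fun R hre had hp => hp _ _ ⟨u, v, h, rfl, rfl⟩))
    huv
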